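/- Let P, P' : ℝ⁶ → ℝ be harmonic homogeneous polynomials (i.e. polynomial functions that are homogeneous and satisfy Σ_{i=0}^{5} ∂²P/∂X_i² = 0 and Σ_{i=0}^{5} ∂²P'/∂X_i² = 0) of degrees ℓ and ℓ' respectively, with |ℓ − ℓ'| ≠ 1. Then ∫_{S⁵} X₀ · P(X) · P'(X) dσ(X) = 0, where σ is the standard hypersurface (surface) measure on the unit sphere S⁵ = { X ∈ ℝ⁶ : |X| = 1 } and X₀ denotes the first coordinate of X = (X₀, X₁, …, X₅). -/

import Mathlib

open MeasureTheory Real MvPolynomial Finset Metric Set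

namespace X0SphHarmAux




/-- 1D Gaussian moment. -/
noncomputable def m (k : ℕ) : ℝ := ∫ t : ℝ, t ^ k * Real.exp (-t ^ 2)

lemma integrable_pow_gauss (k : ℕ) :
    Integrable (fun t : ℝ => t ^ k * Real.exp (-t ^ 2)) := by
  have h := integrable_rpow_mul_exp_neg_mul_sq (b := 1) one_pos
    (s := (k : ℝ)) (lt_of_lt_of_le neg_one_lt_zero (Nat.cast_nonneg k))
  simpa [Real.rpow_natCast] using h

lemma m_rec (k : ℕ) : m (k + 2) = ((k : ℝ) + 1) / 2 * m k := by
  have hderiv : ∀ t : ℝ, HasDerivAt (fun t : ℝ => t ^ (k + 1) * Real.exp (-t ^ 2))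
      (((k : ℝ) + 1) * (t ^ k * Real.exp (-t ^ 2)) - 2 * (t ^ (k + 2) * Real.exp (-t ^ 2))) t := by
    intro t
    have h1 : HasDerivAt (fun t : ℝ => t ^ (k + 1)) (((k : ℝ) + 1) * t ^ k) t := by
      simpa using hasDerivAt_pow (k + 1) t
    have h2 : HasDerivAt (fun t : ℝ => Real.exp (-t ^ 2)) (Real.exp (-t ^ 2) * (-(2 * t))) t := by
      have : HasDerivAt (fun t : ℝ => -t ^ 2) (-(2 * t)) t := by
        simpa using (hasDerivAt_pow 2 t).fun_neg
      exact (Real.hasDerivAt_exp _).comp t this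
    refine (h1.fun_mul h2).congr_deriv ?_
    ring
  have h0 := integral_eq_zero_of_hasDerivAt_of_integrable hderiv
    (((integrable_pow_gauss k).const_mul _).sub ((integrable_pow_gauss (k + 2)).const_mul 2))
    (integrable_pow_gauss (k + 1))
  rw [integral_sub ((integrable_pow_gauss k).const_mul _) ((integrable_pow_gauss (k + 2)).const_mul 2),
    integral_const_mul, integral_const_mul] at h0
  have : ((k : ℝ) + 1) * m k - 2 * m (k + 2) = 0 := h0
  linarith

lemma integrable_gauss : Integrable (fun t : ℝ => Real.exp (-t ^ 2)) := by
  have h := integrable_exp_neg_mul_sq (b := 1) one_pos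
  simpa using h

lemma m_one : m 1 = 0 := by
  have hderiv : ∀ t : ℝ, HasDerivAt (fun t : ℝ => -(1 / 2) * Real.exp (-t ^ 2))
      (t ^ 1 * Real.exp (-t ^ 2)) t := by
    intro t
    have h2 : HasDerivAt (fun t : ℝ => Real.exp (-t ^ 2)) (Real.exp (-t ^ 2) * (-(2 * t))) t := by
      have : HasDerivAt (fun t : ℝ => -t ^ 2) (-(2 * t)) t := by
        simpa using (hasDerivAt_pow 2 t).fun_neg
      exact (Real.hasDerivAt_exp _).comp t this
    refine (h2.const_mul (-(1 / 2 : ℝ))).congr_deriv ?_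
    ring
  exact integral_eq_zero_of_hasDerivAt_of_integrable hderiv (integrable_pow_gauss 1)
    (integrable_gauss.const_mul _)

lemma m_step (k : ℕ) : m (k + 1) = (k : ℝ) / 2 * m (k - 1) := by
  cases k with
  | zero => simpa using m_one
  | succ j => simpa using m_rec j





/-! ### Polynomial algebra -/

lemma pderiv_comm {σ : Type*} [DecidableEq σ] (i j : σ) (f : MvPolynomial σ ℝ) :
    pderiv i (pderiv j f) = pderiv j (pderiv i f) := by
  induction f using MvPolynomial.induction_on' with
  | monomial d c =>
    by_cases hij : i = j
    · subst hij; rfl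
    · simp only [pderiv_monomial]
      rw [Finsupp.tsub_apply, Finsupp.tsub_apply, Finsupp.single_apply, Finsupp.single_apply,
        if_neg (Ne.symm hij), if_neg hij]
      have hsub : d - Finsupp.single j 1 - Finsupp.single i 1
          = d - Finsupp.single i 1 - Finsupp.single j 1 := by
        ext a
        simp only [Finsupp.tsub_apply]
        omega
      rw [hsub]
      congr 1
      simp only [Nat.sub_zero]
      ring
  | add p q hp hq => simp [map_add, hp, hq]

lemma degree_eq_sum_univ {σ : Type*} [Fintype σ] (d : σ →₀ ℕ) :
    Finsupp.degree d = ∑ i : σ, d i :=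
  Finset.sum_subset (Finset.subset_univ _) (fun i _ hi => Finsupp.notMem_support_iff.mp hi)

lemma homog_degree_eq {σ : Type*} {f : MvPolynomial σ ℝ} {n : ℕ} (hf : f.IsHomogeneous n)
    {d : σ →₀ ℕ} (hd : d ∈ f.support) : Finsupp.degree d = n := by
  rw [Finsupp.degree_eq_weight_one]
  exact hf (MvPolynomial.mem_support_iff.mp hd)

lemma euler_monomial (d : Fin 6 →₀ ℕ) (c : ℝ) :
    ∑ i : Fin 6, X i * pderiv i (monomial d c) = (Finsupp.degree d) • monomial d c := by
  rw [degree_eq_sum_univ, Finset.sum_smul]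
  refine Finset.sum_congr rfl fun i _ => ?_
  rw [pderiv_monomial]
  by_cases h : d i = 0
  · simp [h]
  · have hX : X i * monomial (d - Finsupp.single i 1) (c * (d i : ℝ)) =
        monomial (Finsupp.single i 1 + (d - Finsupp.single i 1)) (1 * (c * (d i : ℝ))) := by
      rw [MvPolynomial.X, monomial_mul]
    rw [hX]
    have hd : Finsupp.single i 1 + (d - Finsupp.single i 1) = d := by
      ext a
      simp only [Finsupp.add_apply, Finsupp.tsub_apply, Finsupp.single_apply]
      by_cases ha : i = a
      · subst ha
        rw [if_pos rfl]
        omega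
      · rw [if_neg ha]
        omega
    rw [hd, smul_monomial]
    congr 1
    simp [nsmul_eq_mul]; ring

lemma euler {f : MvPolynomial (Fin 6) ℝ} {n : ℕ} (hf : f.IsHomogeneous n) :
    ∑ i : Fin 6, X i * pderiv i f = n • f := by
  calc ∑ i : Fin 6, X i * pderiv i f
      = ∑ i : Fin 6, X i * pderiv i (∑ d ∈ f.support, monomial d (coeff d f)) := by
        rw [← f.as_sum]
    _ = ∑ d ∈ f.support, ∑ i : Fin 6, X i * pderiv i (monomial d (coeff d f)) := by
        simp_rw [map_sum, Finset.mul_sum]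
        rw [Finset.sum_comm]
    _ = ∑ d ∈ f.support, n • monomial d (coeff d f) := by
        refine Finset.sum_congr rfl fun d hd => ?_
        rw [euler_monomial, homog_degree_eq hf hd]
    _ = n • f := by rw [← Finset.smul_sum, ← f.as_sum]

lemma isHomog_pderiv {f : MvPolynomial (Fin 6) ℝ} {n : ℕ} (hf : f.IsHomogeneous n) (i : Fin 6) :
    (pderiv i f).IsHomogeneous (n - 1) := by
  have : pderiv i f = ∑ d ∈ f.support, pderiv i (monomial d (coeff d f)) := by
    rw [← map_sum, ← f.as_sum]
  rw [this]
  refine IsHomogeneous.sum _ _ _ fun d hd => ?_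
  rw [pderiv_monomial]
  by_cases h : d i = 0
  · simp [h, isHomogeneous_zero]
  · refine isHomogeneous_monomial _ ?_
    have hdeg : Finsupp.degree d = n := homog_degree_eq hf hd
    rw [degree_eq_sum_univ] at hdeg ⊢
    simp only [Finsupp.tsub_apply]
    have h1 : ∀ g : Fin 6 → ℕ, ∑ j : Fin 6, g j = g i + ∑ j ∈ Finset.univ.erase i, g j :=
      fun g => (Finset.add_sum_erase _ g (Finset.mem_univ i)).symm
    rw [h1] at hdeg
    rw [h1]
    have h2 : ∑ j ∈ Finset.univ.erase i, (d j - Finsupp.single i 1 j)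
        = ∑ j ∈ Finset.univ.erase i, d j := by
      refine Finset.sum_congr rfl fun j hj => ?_
      rw [Finsupp.single_apply, if_neg (Finset.ne_of_mem_erase hj).symm]
      omega
    rw [h2, Finsupp.single_apply, if_pos rfl]
    omega

lemma harm_pderiv {f : MvPolynomial (Fin 6) ℝ}
    (h : ∑ j : Fin 6, pderiv j (pderiv j f) = 0) (i : Fin 6) :
    ∑ j : Fin 6, pderiv j (pderiv j (pderiv i f)) = 0 := by
  have h2 := congrArg (pderiv i) h
  rw [map_sum, map_zero] at h2
  have key : ∀ j : Fin 6, pderiv j (pderiv j (pderiv i f))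
      = pderiv i (pderiv j (pderiv j f)) := fun j => by
    rw [pderiv_comm j i f, pderiv_comm j i (pderiv j f)]
  simp_rw [key]
  exact h2

lemma homog_zero_pderiv {f : MvPolynomial (Fin 6) ℝ} (hf : f.IsHomogeneous 0) (i : Fin 6) :
    pderiv i f = 0 := by
  have hd := ((MvPolynomial.totalDegree_zero_iff_isHomogeneous (p := f)).mpr hf)
  rw [totalDegree_eq_zero_iff] at hd
  have : pderiv i f = ∑ d ∈ f.support, pderiv i (monomial d (coeff d f)) := by
    rw [← map_sum, ← f.as_sum]
  rw [this]
  refine Finset.sum_eq_zero fun d hdm => ?_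
  rw [pderiv_monomial, hd d hdm i]
  simp

/-! ### The Gaussian functional -/

noncomputable def w (x : Fin 6 → ℝ) : ℝ := ∏ i, Real.exp (-(x i) ^ 2)

noncomputable def G (f : MvPolynomial (Fin 6) ℝ) : ℝ := ∫ x : Fin 6 → ℝ, eval x f * w x

lemma eval_monomial_eq (x : Fin 6 → ℝ) (d : Fin 6 →₀ ℕ) (c : ℝ) :
    eval x (monomial d c) = c * ∏ i, x i ^ d i := by
  rw [eval_monomial, Finsupp.prod_fintype]
  intro i; exact pow_zero _

lemma integrable_monomial (d : Fin 6 →₀ ℕ) (c : ℝ) :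
    Integrable (fun x : Fin 6 → ℝ => eval x (monomial d c) * w x) := by
  have : (fun x : Fin 6 → ℝ => eval x (monomial d c) * w x)
      = fun x => c * ∏ i, (x i ^ d i * Real.exp (-(x i) ^ 2)) := by
    funext x
    rw [eval_monomial_eq, w, Finset.prod_mul_distrib, mul_assoc]
  rw [this]
  exact (Integrable.fintype_prod fun i => integrable_pow_gauss (d i)).const_mul c

lemma integrable_eval (f : MvPolynomial (Fin 6) ℝ) :
    Integrable (fun x : Fin 6 → ℝ => eval x f * w x) := by
  have : (fun x : Fin 6 → ℝ => eval x f * w x)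
      = fun x => ∑ d ∈ f.support, eval x (monomial d (coeff d f)) * w x := by
    funext x
    rw [← Finset.sum_mul, ← map_sum, ← f.as_sum]
  rw [this]
  exact integrable_finset_sum _ fun d _ => integrable_monomial d _

lemma G_sum {ι : Type*} (s : Finset ι) (g : ι → MvPolynomial (Fin 6) ℝ) :
    G (∑ i ∈ s, g i) = ∑ i ∈ s, G (g i) := by
  unfold G
  simp_rw [map_sum, Finset.sum_mul]
  exact integral_finset_sum s fun i _ => integrable_eval (g i)

lemma G_add (f g : MvPolynomial (Fin 6) ℝ) : G (f + g) = G f + G g := by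
  unfold G
  simp_rw [map_add, add_mul]
  exact integral_add (integrable_eval f) (integrable_eval g)

lemma G_zero : G 0 = 0 := by simp [G]

lemma G_nsmul (n : ℕ) (f : MvPolynomial (Fin 6) ℝ) : G (n • f) = (n : ℝ) * G f := by
  unfold G
  have h : ∀ x : Fin 6 → ℝ, eval x (n • f) = (n : ℝ) * eval x f := fun x => by
    rw [map_nsmul]; exact nsmul_eq_mul _ _
  simp_rw [h, mul_assoc]
  exact integral_const_mul _ _

lemma G_monomial (d : Fin 6 →₀ ℕ) (c : ℝ) : G (monomial d c) = c * ∏ i, m (d i) := by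
  unfold G m
  have : (fun x : Fin 6 → ℝ => eval x (monomial d c) * w x)
      = fun x => c * ∏ i, (x i ^ d i * Real.exp (-(x i) ^ 2)) := by
    funext x
    rw [eval_monomial_eq, w, Finset.prod_mul_distrib, mul_assoc]
  rw [this, integral_const_mul, integral_fintype_prod_volume_eq_prod
    (f := fun (i : Fin 6) (t : ℝ) => t ^ d i * Real.exp (-t ^ 2))]


lemma G_X_mul_monomial (i : Fin 6) (d : Fin 6 →₀ ℕ) (c : ℝ) :
    G (X i * monomial d c) = 1 / 2 * G (pderiv i (monomial d c)) := by
  have hX : X i * monomial d c = monomial (Finsupp.single i 1 + d) (1 * c) := by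
    rw [MvPolynomial.X, monomial_mul]
  rw [hX, pderiv_monomial, G_monomial, G_monomial, one_mul]
  have hL : ∏ j : Fin 6, m (((Finsupp.single i 1 + d : Fin 6 →₀ ℕ) j))
      = m (((Finsupp.single i 1 + d : Fin 6 →₀ ℕ) i)) * ∏ j ∈ Finset.univ.erase i, m (((Finsupp.single i 1 + d : Fin 6 →₀ ℕ) j)) :=
    (Finset.mul_prod_erase Finset.univ _ (Finset.mem_univ i)).symm
  have hR : ∏ j : Fin 6, m (((d - Finsupp.single i 1 : Fin 6 →₀ ℕ) j))
      = m (((d - Finsupp.single i 1 : Fin 6 →₀ ℕ) i)) * ∏ j ∈ Finset.univ.erase i, m (((d - Finsupp.single i 1 : Fin 6 →₀ ℕ) j)) :=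
    (Finset.mul_prod_erase Finset.univ _ (Finset.mem_univ i)).symm
  rw [hL, hR]
  have h1 : ((Finsupp.single i 1 + d : Fin 6 →₀ ℕ) i) = d i + 1 := by
    rw [Finsupp.add_apply, Finsupp.single_eq_same]; omega
  have h2 : ((d - Finsupp.single i 1 : Fin 6 →₀ ℕ) i) = d i - 1 := by
    rw [Finsupp.tsub_apply, Finsupp.single_eq_same]
  have h3 : ∏ j ∈ Finset.univ.erase i, m (((Finsupp.single i 1 + d : Fin 6 →₀ ℕ) j))
      = ∏ j ∈ Finset.univ.erase i, m (d j) := by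
    refine Finset.prod_congr rfl fun j hj => ?_
    rw [Finsupp.add_apply, Finsupp.single_apply, if_neg (Finset.ne_of_mem_erase hj).symm,
      zero_add]
  have h4 : ∏ j ∈ Finset.univ.erase i, m (((d - Finsupp.single i 1 : Fin 6 →₀ ℕ) j))
      = ∏ j ∈ Finset.univ.erase i, m (d j) := by
    refine Finset.prod_congr rfl fun j hj => ?_
    rw [Finsupp.tsub_apply, Finsupp.single_apply, if_neg (Finset.ne_of_mem_erase hj).symm,
      Nat.sub_zero]
  rw [h1, h2, h3, h4, m_step (d i)]
  ring

lemma G_X_mul (i : Fin 6) (f : MvPolynomial (Fin 6) ℝ) :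
    G (X i * f) = 1 / 2 * G (pderiv i f) := by
  calc G (X i * f) = G (∑ d ∈ f.support, X i * monomial d (coeff d f)) := by
        rw [← Finset.mul_sum, ← f.as_sum]
    _ = ∑ d ∈ f.support, G (X i * monomial d (coeff d f)) := G_sum _ _
    _ = ∑ d ∈ f.support, 1 / 2 * G (pderiv i (monomial d (coeff d f))) := by
        exact Finset.sum_congr rfl fun d _ => G_X_mul_monomial i d _
    _ = 1 / 2 * G (pderiv i f) := by
        rw [← Finset.mul_sum, ← G_sum, ← map_sum, ← f.as_sum]

lemma key {n : ℕ} {A : MvPolynomial (Fin 6) ℝ} (B : MvPolynomial (Fin 6) ℝ)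
    (hA : A.IsHomogeneous n) (hAh : ∑ i : Fin 6, pderiv i (pderiv i A) = 0) :
    2 * (n : ℝ) * G (A * B) = ∑ i : Fin 6, G (pderiv i A * pderiv i B) := by
  have e1 : n • (A * B) = ∑ i : Fin 6, X i * (pderiv i A * B) := by
    rw [← smul_mul_assoc, ← euler hA, Finset.sum_mul]
    exact Finset.sum_congr rfl fun i _ => (mul_assoc _ _ _)
  have e2 : (n : ℝ) * G (A * B) = 1 / 2 * ∑ i : Fin 6, G (pderiv i (pderiv i A * B)) := by
    rw [← G_nsmul, e1, G_sum, Finset.mul_sum]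
    exact Finset.sum_congr rfl fun i _ => G_X_mul i _
  have e3 : ∀ i : Fin 6, G (pderiv i (pderiv i A * B))
      = G (pderiv i (pderiv i A) * B) + G (pderiv i A * pderiv i B) := fun i => by
    rw [pderiv_mul, G_add]
  have e4 : ∑ i : Fin 6, G (pderiv i (pderiv i A) * B) = 0 := by
    rw [← G_sum, ← Finset.sum_mul, hAh, zero_mul, G_zero]
  have e5 : ∑ i : Fin 6, G (pderiv i (pderiv i A * B))
      = ∑ i : Fin 6, G (pderiv i A * pderiv i B) := by
    simp_rw [e3]
    rw [Finset.sum_add_distrib, e4, zero_add]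
  rw [mul_assoc, e2, e5]
  ring

lemma ortho {a b : ℕ} {A B : MvPolynomial (Fin 6) ℝ}
    (hA : A.IsHomogeneous a) (hAh : ∑ i : Fin 6, pderiv i (pderiv i A) = 0)
    (hB : B.IsHomogeneous b) (hBh : ∑ i : Fin 6, pderiv i (pderiv i B) = 0)
    (hab : a ≠ b) : G (A * B) = 0 := by
  have h1 := key B hA hAh
  have h2 := key A hB hBh
  rw [mul_comm B A] at h2
  have h3 : ∑ i : Fin 6, G (pderiv i B * pderiv i A)
      = ∑ i : Fin 6, G (pderiv i A * pderiv i B) := by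
    exact Finset.sum_congr rfl fun i _ => by rw [mul_comm]
  rw [h3] at h2
  have hne : (a : ℝ) ≠ (b : ℝ) := by exact_mod_cast hab
  have : (2 * (a : ℝ) - 2 * b) * G (A * B) = 0 := by linarith
  rcases mul_eq_zero.mp this with h | h
  · exact absurd (by linarith : (a : ℝ) = b) hne
  · exact h

lemma G_main {ℓ ℓ' : ℕ} {P P' : MvPolynomial (Fin 6) ℝ}
    (hPhom : P.IsHomogeneous ℓ) (hP'hom : P'.IsHomogeneous ℓ')
    (hPharm : ∑ i : Fin 6, pderiv i (pderiv i P) = 0)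
    (hP'harm : ∑ i : Fin 6, pderiv i (pderiv i P') = 0)
    (hdeg : |(ℓ : ℤ) - (ℓ' : ℤ)| ≠ 1) :
    G (X 0 * (P * P')) = 0 := by
  rw [G_X_mul, pderiv_mul, G_add]
  have hT1 : G (pderiv 0 P * P') = 0 := by
    by_cases hℓ : ℓ = 0
    · rw [homog_zero_pderiv (hℓ ▸ hPhom) 0, zero_mul, G_zero]
    · refine ortho (isHomog_pderiv hPhom 0) (harm_pderiv hPharm 0) hP'hom hP'harm ?_
      intro h
      apply hdeg
      have : (ℓ : ℤ) - ℓ' = 1 := by omega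
      rw [this, abs_one]
  have hT2 : G (P * pderiv 0 P') = 0 := by
    by_cases hℓ' : ℓ' = 0
    · rw [homog_zero_pderiv (hℓ' ▸ hP'hom) 0, mul_zero, G_zero]
    · refine ortho hPhom hPharm (isHomog_pderiv hP'hom 0) (harm_pderiv hP'harm 0) ?_
      intro h
      apply hdeg
      have : (ℓ : ℤ) - ℓ' = -1 := by omega
      rw [this, abs_neg, abs_one]
  rw [hT1, hT2]
  ring




local notation "E6" => EuclideanSpace ℝ (Fin 6)

lemma eval_homog {Q : MvPolynomial (Fin 6) ℝ} {d : ℕ} (hQ : Q.IsHomogeneous d)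
    (r : ℝ) (x : Fin 6 → ℝ) :
    eval (fun i => r * x i) Q = r ^ d * eval x Q := by
  calc eval (fun i => r * x i) Q
      = ∑ dd ∈ Q.support, eval (fun i => r * x i) (monomial dd (coeff dd Q)) := by
        rw [← map_sum, ← Q.as_sum]
    _ = ∑ dd ∈ Q.support, r ^ d * eval x (monomial dd (coeff dd Q)) := by
        refine Finset.sum_congr rfl fun dd hdd => ?_
        rw [eval_monomial_eq, eval_monomial_eq]
        have : ∏ i, (r * x i) ^ dd i = r ^ d * ∏ i, x i ^ dd i := by
          simp_rw [mul_pow]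
          rw [Finset.prod_mul_distrib, Finset.prod_pow_eq_pow_sum]
          congr 2
          rw [← degree_eq_sum_univ, homog_degree_eq hQ hdd]
        rw [this]; ring
    _ = r ^ d * eval x Q := by rw [← Finset.mul_sum, ← map_sum, ← Q.as_sum]

/-- Transfer the Euclidean Gaussian integral to the pi-space functional `G`. -/
lemma euclidean_eq_G (Q : MvPolynomial (Fin 6) ℝ) :
    ∫ x : E6, eval (fun i => x i) Q * Real.exp (-‖x‖ ^ 2) = G Q := by
  have h := (EuclideanSpace.volume_preserving_symm_measurableEquiv_toLp (Fin 6)).symm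
  rw [← h.integral_comp (MeasurableEquiv.measurableEmbedding _)
    (fun x : E6 => eval (fun i => x i) Q * Real.exp (-‖x‖ ^ 2))]
  unfold G w
  refine integral_congr_ae (Filter.Eventually.of_forall fun y => ?_)
  have hnorm : ‖(MeasurableEquiv.toLp 2 (Fin 6 → ℝ)).symm.symm y‖ ^ 2 = ∑ i, (y i) ^ 2 := by
    rw [EuclideanSpace.norm_eq]
    rw [Real.sq_sqrt (Finset.sum_nonneg fun i _ => by positivity)]
    simp only [Real.norm_eq_abs, sq_abs]
    exact Finset.sum_congr rfl fun i _ => rfl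
  have h1 : eval (fun i => ((MeasurableEquiv.toLp 2 (Fin 6 → ℝ)).symm.symm y) i) Q
      = eval y Q := rfl
  show eval (fun i => ((MeasurableEquiv.toLp 2 (Fin 6 → ℝ)).symm.symm y) i) Q
      * Real.exp (-‖(MeasurableEquiv.toLp 2 (Fin 6 → ℝ)).symm.symm y‖ ^ 2)
      = eval y Q * ∏ i, Real.exp (-(y i) ^ 2)
  rw [h1, hnorm, ← Real.exp_sum]
  congr 1
  rw [← Finset.sum_neg_distrib]

/-- Polar-coordinates factorization of the Euclidean Gaussian integral of a homogeneous
polynomial. -/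
lemma euclidean_eq_polar {Q : MvPolynomial (Fin 6) ℝ} {d : ℕ} (hQ : Q.IsHomogeneous d) :
    ∫ x : E6, eval (fun i => x i) Q * Real.exp (-‖x‖ ^ 2)
    = (∫ ω : Metric.sphere (0 : E6) 1,
          eval (fun i => (ω : E6) i) Q ∂((volume : Measure E6).toSphere))
      * ∫ r in Set.Ioi (0 : ℝ), r ^ (5 + d) * Real.exp (-r ^ 2) := by
  set F : E6 → ℝ := fun x => eval (fun i => x i) Q * Real.exp (-‖x‖ ^ 2) with hF
  have hdim : Module.finrank ℝ E6 = 6 := finrank_euclideanSpace_fin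
  have step1 : ∫ x : E6, F x = ∫ x : ({0}ᶜ : Set E6), F x ∂((volume : Measure E6).comap Subtype.val) := by
    rw [integral_subtype_comap (measurableSet_singleton (0 : E6)).compl F,
      MeasureTheory.restrict_compl_singleton]
  have hmp := (volume : Measure E6).measurePreserving_homeomorphUnitSphereProd
  rw [show Module.finrank ℝ E6 - 1 = 5 by rw [hdim]] at hmp
  have step2 : ∫ x : ({0}ᶜ : Set E6), F x ∂((volume : Measure E6).comap Subtype.val)
      = ∫ p : Metric.sphere (0 : E6) 1 × Set.Ioi (0 : ℝ),
          F (((homeomorphUnitSphereProd E6).symm p : ({0}ᶜ : Set E6)) : E6)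
          ∂(((volume : Measure E6).toSphere).prod (Measure.volumeIoiPow 5)) := by
    rw [← hmp.integral_comp (Homeomorph.measurableEmbedding _)
      (fun p => F (((homeomorphUnitSphereProd E6).symm p : ({0}ᶜ : Set E6)) : E6))]
    refine integral_congr_ae (Filter.Eventually.of_forall fun x => ?_)
    simp only [Homeomorph.symm_apply_apply]
  have step3 : ∀ p : Metric.sphere (0 : E6) 1 × Set.Ioi (0 : ℝ),
      F (((homeomorphUnitSphereProd E6).symm p : ({0}ᶜ : Set E6)) : E6)
      = (fun ω : Metric.sphere (0 : E6) 1 => eval (fun i => (ω : E6) i) Q) p.1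
        * (fun r : Set.Ioi (0 : ℝ) => (r : ℝ) ^ d * Real.exp (-(r : ℝ) ^ 2)) p.2 := by
    rintro ⟨ω, r⟩
    have hval : (((homeomorphUnitSphereProd E6).symm (ω, r) : ({0}ᶜ : Set E6)) : E6)
        = (r : ℝ) • (ω : E6) := rfl
    have hc : ∀ i, (((r : ℝ) • (ω : E6)) i) = (r : ℝ) * (ω : E6) i := fun i => rfl
    have hnorm : ‖(r : ℝ) • (ω : E6)‖ = (r : ℝ) := by
      rw [norm_smul, mem_sphere_zero_iff_norm.mp ω.2, mul_one, Real.norm_eq_abs,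
        abs_of_pos r.2]
    simp only [hF, hval, hnorm]
    rw [show (fun i => (((r : ℝ) • (ω : E6)) i)) = fun i => (r : ℝ) * (ω : E6) i from
      funext hc, eval_homog hQ]
    ring
  have step4 : ∫ p : Metric.sphere (0 : E6) 1 × Set.Ioi (0 : ℝ),
      F (((homeomorphUnitSphereProd E6).symm p : ({0}ᶜ : Set E6)) : E6)
      ∂(((volume : Measure E6).toSphere).prod (Measure.volumeIoiPow 5))
      = (∫ ω : Metric.sphere (0 : E6) 1,
          eval (fun i => (ω : E6) i) Q ∂((volume : Measure E6).toSphere))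
        * ∫ r : Set.Ioi (0 : ℝ), (r : ℝ) ^ d * Real.exp (-(r : ℝ) ^ 2)
            ∂(Measure.volumeIoiPow 5) := by
    rw [show (fun p : Metric.sphere (0 : E6) 1 × Set.Ioi (0 : ℝ) =>
        F (((homeomorphUnitSphereProd E6).symm p : ({0}ᶜ : Set E6)) : E6)) = fun p =>
        (fun ω : Metric.sphere (0 : E6) 1 => eval (fun i => (ω : E6) i) Q) p.1
        * (fun r : Set.Ioi (0 : ℝ) => (r : ℝ) ^ d * Real.exp (-(r : ℝ) ^ 2)) p.2 from
      funext step3]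
    exact integral_prod_mul (f := fun ω : Metric.sphere (0 : E6) 1 => eval (fun i => (ω : E6) i) Q)
      (g := fun r : Set.Ioi (0 : ℝ) => (r : ℝ) ^ d * Real.exp (-(r : ℝ) ^ 2))
  have step5 : ∫ r : Set.Ioi (0 : ℝ), (r : ℝ) ^ d * Real.exp (-(r : ℝ) ^ 2)
      ∂(Measure.volumeIoiPow 5)
      = ∫ r in Set.Ioi (0 : ℝ), r ^ (5 + d) * Real.exp (-r ^ 2) := by
    simp only [Measure.volumeIoiPow, ENNReal.ofReal]
    rw [integral_withDensity_eq_integral_smul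
      ((measurable_subtype_coe.pow_const 5).real_toNNReal) _,
      integral_subtype_comap measurableSet_Ioi
        (fun a : ℝ => Real.toNNReal (a ^ 5) • (a ^ d * Real.exp (-a ^ 2)))]
    refine setIntegral_congr_fun measurableSet_Ioi fun x hx => ?_
    rw [NNReal.smul_def, Real.coe_toNNReal _ (pow_nonneg (le_of_lt hx) _), smul_eq_mul, pow_add]
    ring
  rw [step1, step2, step4, step5]


lemma c_pos (d : ℕ) : 0 < ∫ r in Set.Ioi (0 : ℝ), r ^ (5 + d) * Real.exp (-r ^ 2) := by
  have hint : IntegrableOn (fun r : ℝ => r ^ (5 + d) * Real.exp (-r ^ 2)) (Set.Ioi 0) :=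
    (integrable_pow_gauss (5 + d)).integrableOn
  have hnn : 0 ≤ᵐ[volume.restrict (Set.Ioi (0 : ℝ))]
      fun r : ℝ => r ^ (5 + d) * Real.exp (-r ^ 2) := by
    filter_upwards [ae_restrict_mem measurableSet_Ioi] with r hr
    have : (0 : ℝ) < r := hr
    positivity
  rw [setIntegral_pos_iff_support_of_nonneg_ae hnn hint]
  have hsub : Set.Ioi (0 : ℝ)
      ⊆ Function.support (fun r : ℝ => r ^ (5 + d) * Real.exp (-r ^ 2)) ∩ Set.Ioi 0 := by
    intro r hr
    have hrpos : (0 : ℝ) < r := hr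
    refine ⟨?_, hr⟩
    rw [Function.mem_support]
    have h2 : 0 < r ^ (5 + d) * Real.exp (-r ^ 2) := by positivity
    exact h2.ne'
  refine lt_of_lt_of_le ?_ (measure_mono hsub)
  rw [Real.volume_Ioi]
  exact ENNReal.zero_lt_top

end X0SphHarmAux

open X0SphHarmAux

/-- **Orthogonality of spherical harmonics of non-adjacent degrees against `X₀`:**
if `P, P'` are harmonic polynomials on `ℝ⁶`, homogeneous of degrees `ℓ, ℓ'` with
`|ℓ − ℓ'| ≠ 1`, then `∫_{S⁵} X₀ P(X) P'(X) dσ(X) = 0`, where `σ` is the standard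
hypersurface measure on the unit sphere `S⁵ ⊂ ℝ⁶`. -/
theorem integral_X0_sphHarm_eq_zero
    (ℓ ℓ' : ℕ) (P P' : MvPolynomial (Fin 6) ℝ)
    (hPhom : P.IsHomogeneous ℓ) (hP'hom : P'.IsHomogeneous ℓ')
    (hPharm : ∑ i : Fin 6, MvPolynomial.pderiv i (MvPolynomial.pderiv i P) = 0)
    (hP'harm : ∑ i : Fin 6, MvPolynomial.pderiv i (MvPolynomial.pderiv i P') = 0)
    (hdeg : |(ℓ : ℤ) - (ℓ' : ℤ)| ≠ 1) :
    ∫ X : Metric.sphere (0 : EuclideanSpace ℝ (Fin 6)) 1,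
        ((X : EuclideanSpace ℝ (Fin 6)) 0)
          * MvPolynomial.eval (fun i => (X : EuclideanSpace ℝ (Fin 6)) i) P
          * MvPolynomial.eval (fun i => (X : EuclideanSpace ℝ (Fin 6)) i) P'
        ∂((volume : Measure (EuclideanSpace ℝ (Fin 6))).toSphere) = 0 := by
  set Q : MvPolynomial (Fin 6) ℝ := X 0 * (P * P') with hQdef
  have hQ : Q.IsHomogeneous (1 + (ℓ + ℓ')) := (isHomogeneous_X ℝ 0).mul (hPhom.mul hP'hom)
  have h1 := euclidean_eq_polar hQ
  have h2 := euclidean_eq_G Q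
  have h3 : G Q = 0 := G_main hPhom hP'hom hPharm hP'harm hdeg
  have hc := c_pos (1 + (ℓ + ℓ'))
  have hS : (∫ ω : Metric.sphere (0 : EuclideanSpace ℝ (Fin 6)) 1,
      eval (fun i => (ω : EuclideanSpace ℝ (Fin 6)) i) Q
      ∂((volume : Measure (EuclideanSpace ℝ (Fin 6))).toSphere)) = 0 := by
    have hmul := h1.symm.trans (h2.trans h3)
    rcases mul_eq_zero.mp hmul with h | h
    · exact h
    · exact absurd h hc.ne'
  calc ∫ X : Metric.sphere (0 : EuclideanSpace ℝ (Fin 6)) 1,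
        ((X : EuclideanSpace ℝ (Fin 6)) 0)
          * MvPolynomial.eval (fun i => (X : EuclideanSpace ℝ (Fin 6)) i) P
          * MvPolynomial.eval (fun i => (X : EuclideanSpace ℝ (Fin 6)) i) P'
        ∂((volume : Measure (EuclideanSpace ℝ (Fin 6))).toSphere)
      = ∫ ω : Metric.sphere (0 : EuclideanSpace ℝ (Fin 6)) 1,
          eval (fun i => (ω : EuclideanSpace ℝ (Fin 6)) i) Q
          ∂((volume : Measure (EuclideanSpace ℝ (Fin 6))).toSphere) := by
        refine integral_congr_ae (Filter.Eventually.of_forall fun ω => ?_)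
        simp only [hQdef, map_mul, eval_X]
        ring
    _ = 0 := hS
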